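/- The function u is μ-integrable and ∫ u dμ = 0; that is, the solution of the Poisson equation given by u(x) = ∫_0^∞ (∫ f dμ_t^x) dt is centered with respect to the invariant measure μ. -/

import Mathlib

/-!
For `t > 0` split `f` at the radius `R = 1 + t`. On the ball `|f| ≤ 2 C_f R^β`, so by the
layer-cake formula the integrals of this part against `μ_t^x` and `μ` differ by at most
`2 C_f R^β ‖μ_t^x − μ‖`; off the ball `|f(y)| ≤ 2 C_f R^{-2} |y|^{β+2}`, which the moment bounds
control. As `∫ f dμ = 0`, this gives `|∫ f dμ_t^x| ≤ ψ(x) (1 + t)^{-2}` with `ψ` of polynomial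
growth, hence `μ`-integrable. Fubini then allows exchanging the integrals in `∫ u dμ`, and
invariance turns each `∫ (∫ f dμ_t^x) μ(dx)` into `∫ f dμ = 0`.
-/

open MeasureTheory Set

/-- Total variation norm of the difference of two (finite) measures. -/
noncomputable def tvNorm {α : Type*} [MeasurableSpace α] (μ ν : Measure α) : ℝ :=
  (⨆ (E : Set α) (_ : MeasurableSet E), (μ E - ν E)).toReal +
  (⨆ (E : Set α) (_ : MeasurableSet E), (ν E - μ E)).toReal

open ProbabilityTheory

lemma integrable_and_integral_le_of_lintegral_ofReal_le {α : Type*} [MeasurableSpace α]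
    {ν : Measure α} {g : α → ℝ} (hg : AEStronglyMeasurable g ν) (hg0 : 0 ≤ᵐ[ν] g) {B : ℝ}
    (hB : 0 ≤ B) (h : ∫⁻ y, ENNReal.ofReal (g y) ∂ν ≤ ENNReal.ofReal B) :
    Integrable g ν ∧ ∫ y, g y ∂ν ≤ B := by
  refine ⟨(lintegral_ofReal_ne_top_iff_integrable hg hg0).1 (h.trans_lt ENNReal.ofReal_lt_top).ne,
    ?_⟩
  rw [integral_eq_lintegral_of_nonneg_ae hg0 hg]
  exact ENNReal.toReal_le_of_le_ofReal hB h

section TotalVariation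

variable {α : Type*} [MeasurableSpace α] {ν ν' : Measure α}

lemma lintegral_le_lintegral_add_mul_iSup_sub {g : α → ℝ} (hg : Measurable g)
    (hg0 : ∀ y, 0 ≤ g y) {M : ℝ} (hgM : ∀ y, g y ≤ M) :
    ∫⁻ y, ENNReal.ofReal (g y) ∂ν ≤ ∫⁻ y, ENNReal.ofReal (g y) ∂ν' +
      ENNReal.ofReal M * ⨆ (E : Set α) (_ : MeasurableSet E), (ν E - ν' E) := by
  set S := ⨆ (E : Set α) (_ : MeasurableSet E), (ν E - ν' E)
  have hlevel : ∀ t ∈ Ioi (0 : ℝ),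
      ν {y | t < g y} ≤ ν' {y | t < g y} + (Iic M).indicator (fun _ ↦ S) t := by
    intro t _
    by_cases htM : t ≤ M
    · rw [indicator_of_mem (mem_Iic.2 htM), add_comm]
      calc ν {y | t < g y} ≤ ν {y | t < g y} - ν' {y | t < g y} + ν' {y | t < g y} :=
            le_tsub_add
        _ ≤ S + ν' {y | t < g y} := by
            gcongr
            exact le_iSup₂ (f := fun E (_ : MeasurableSet E) ↦ ν E - ν' E) _
              (measurableSet_lt measurable_const hg)
    · have : {y | t < g y} = ∅ :=
        eq_empty_of_forall_notMem fun y hy ↦ htM ((le_of_lt hy).trans (hgM y))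
      simp [this]
  have hmeas : Measurable fun t : ℝ ↦ ν' {y | t < g y} :=
    Antitone.measurable fun s t hst ↦ measure_mono fun y hy ↦ lt_of_le_of_lt hst hy
  rw [lintegral_eq_lintegral_meas_lt ν (ae_of_all _ hg0) hg.aemeasurable,
    lintegral_eq_lintegral_meas_lt ν' (ae_of_all _ hg0) hg.aemeasurable]
  calc ∫⁻ t in Ioi 0, ν {y | t < g y}
      ≤ ∫⁻ t in Ioi 0, (ν' {y | t < g y} + (Iic M).indicator (fun _ ↦ S) t) :=
        setLIntegral_mono' measurableSet_Ioi hlevel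
    _ = (∫⁻ t in Ioi 0, ν' {y | t < g y}) + ENNReal.ofReal M * S := by
        rw [lintegral_add_left hmeas, lintegral_indicator_const measurableSet_Iic,
          Measure.restrict_apply measurableSet_Iic, Iic_inter_Ioi, Real.volume_Ioc, sub_zero,
          mul_comm]

lemma iSup_measure_sub_ne_top [IsFiniteMeasure ν] :
    ⨆ (E : Set α) (_ : MeasurableSet E), (ν E - ν' E) ≠ ⊤ :=
  ne_top_of_le_ne_top (measure_ne_top ν univ)
    (iSup₂_le fun E _ ↦ tsub_le_self.trans (measure_mono (subset_univ E)))

lemma integral_sub_integral_le_mul_iSup_sub [IsFiniteMeasure ν] [IsFiniteMeasure ν']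
    {g : α → ℝ} (hg : Measurable g) (hg0 : ∀ y, 0 ≤ g y) {M : ℝ} (hM : 0 ≤ M)
    (hgM : ∀ y, g y ≤ M) :
    ∫ y, g y ∂ν - ∫ y, g y ∂ν' ≤
      M * (⨆ (E : Set α) (_ : MeasurableSet E), (ν E - ν' E)).toReal := by
  have hint : Integrable g ν' :=
    .of_bound hg.aestronglyMeasurable M
      (ae_of_all _ fun y ↦ by rw [Real.norm_of_nonneg (hg0 y)]; exact hgM y)
  rw [integral_eq_lintegral_of_nonneg_ae (ae_of_all _ hg0) hg.aestronglyMeasurable,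
    integral_eq_lintegral_of_nonneg_ae (ae_of_all _ hg0) hg.aestronglyMeasurable,
    sub_le_iff_le_add', ← ENNReal.toReal_ofReal hM, ← ENNReal.toReal_mul,
    ← ENNReal.toReal_add hint.lintegral_lt_top.ne
      (ENNReal.mul_ne_top ENNReal.ofReal_ne_top iSup_measure_sub_ne_top)]
  exact ENNReal.toReal_mono
    (ENNReal.add_ne_top.2 ⟨hint.lintegral_lt_top.ne,
      ENNReal.mul_ne_top ENNReal.ofReal_ne_top iSup_measure_sub_ne_top⟩)
    (lintegral_le_lintegral_add_mul_iSup_sub hg hg0 hgM)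

lemma abs_integral_sub_integral_le_mul_tvNorm [IsFiniteMeasure ν] [IsFiniteMeasure ν']
    {g : α → ℝ} (hg : Measurable g) {M : ℝ} (hM : 0 ≤ M) (hgM : ∀ y, |g y| ≤ M) :
    |∫ y, g y ∂ν - ∫ y, g y ∂ν'| ≤ M * tvNorm ν ν' := by
  have hsplit : ∀ (ρ : Measure α) [IsFiniteMeasure ρ],
      ∫ y, g y ∂ρ = ∫ y, max (g y) 0 ∂ρ - ∫ y, max (-g y) 0 ∂ρ := fun ρ _ ↦ by
    simpa only [Real.coe_toNNReal'] using integral_eq_integral_pos_part_sub_integral_neg_part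
      (Integrable.of_bound hg.aestronglyMeasurable M (ae_of_all ρ hgM))
  have hpos : Measurable fun y ↦ max (g y) 0 := hg.max measurable_const
  have hneg : Measurable fun y ↦ max (-g y) 0 := hg.neg.max measurable_const
  have hposM : ∀ y, max (g y) 0 ≤ M := fun y ↦ max_le ((le_abs_self _).trans (hgM y)) hM
  have hnegM : ∀ y, max (-g y) 0 ≤ M := fun y ↦ max_le ((neg_le_abs _).trans (hgM y)) hM
  have h₁ := integral_sub_integral_le_mul_iSup_sub (ν := ν) (ν' := ν') hpos
    (fun _ ↦ le_max_right _ _) hM hposM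
  have h₂ := integral_sub_integral_le_mul_iSup_sub (ν := ν) (ν' := ν') hneg
    (fun _ ↦ le_max_right _ _) hM hnegM
  have h₃ := integral_sub_integral_le_mul_iSup_sub (ν := ν') (ν' := ν) hpos
    (fun _ ↦ le_max_right _ _) hM hposM
  have h₄ := integral_sub_integral_le_mul_iSup_sub (ν := ν') (ν' := ν) hneg
    (fun _ ↦ le_max_right _ _) hM hnegM
  rw [hsplit ν, hsplit ν', tvNorm, abs_le]
  constructor <;> linarith

end TotalVariation

section Truncation

variable {α : Type*} [NormedAddCommGroup α] {f : α → ℝ} {β p Cf R : ℝ}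

lemma nonneg_of_abs_le_mul_one_add_rpow (hfb : ∀ y, |f y| ≤ Cf * (1 + ‖y‖ ^ β)) : 0 ≤ Cf :=
  nonneg_of_mul_nonneg_left ((abs_nonneg _).trans (hfb 0)) (by positivity)

lemma abs_le_two_mul_rpow_of_one_le_norm (hβ : 0 ≤ β) (hfb : ∀ y, |f y| ≤ Cf * (1 + ‖y‖ ^ β))
    {y : α} (hy : 1 ≤ ‖y‖) : |f y| ≤ 2 * Cf * ‖y‖ ^ β := by
  have := Real.one_le_rpow hy hβ
  nlinarith [hfb y, nonneg_of_abs_le_mul_one_add_rpow hfb]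

lemma abs_indicator_closedBall_le (hβ : 0 ≤ β) (hR : 1 ≤ R)
    (hfb : ∀ y, |f y| ≤ Cf * (1 + ‖y‖ ^ β)) (y : α) :
    |(Metric.closedBall 0 R).indicator f y| ≤ 2 * Cf * R ^ β := by
  have hCf := nonneg_of_abs_le_mul_one_add_rpow hfb
  have hRβ := Real.one_le_rpow hR hβ
  by_cases hy : y ∈ Metric.closedBall 0 R
  · rw [indicator_of_mem hy]
    have : ‖y‖ ^ β ≤ R ^ β := Real.rpow_le_rpow (norm_nonneg y) (mem_closedBall_zero_iff.1 hy) hβ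
    nlinarith [hfb y]
  · rw [indicator_of_notMem hy, abs_zero]
    positivity

lemma abs_indicator_compl_closedBall_le (hβ : 0 ≤ β) (hp : 0 ≤ p) (hR : 1 ≤ R)
    (hfb : ∀ y, |f y| ≤ Cf * (1 + ‖y‖ ^ β)) (y : α) :
    |(Metric.closedBall 0 R)ᶜ.indicator f y| ≤ 2 * Cf * R ^ (-p) * ‖y‖ ^ (β + p) := by
  have hCf := nonneg_of_abs_le_mul_one_add_rpow hfb
  by_cases hy : y ∈ (Metric.closedBall 0 R)ᶜ
  · rw [indicator_of_mem hy]
    have hRy : R < ‖y‖ := by simpa using hy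
    have hy0 : 0 < ‖y‖ := by linarith
    have hsplit : ‖y‖ ^ β = ‖y‖ ^ (-p) * ‖y‖ ^ (β + p) := by
      rw [← Real.rpow_add hy0]; ring_nf
    have hpow : ‖y‖ ^ (-p) ≤ R ^ (-p) :=
      Real.rpow_le_rpow_of_nonpos (by linarith) hRy.le (by linarith)
    calc |f y| ≤ 2 * Cf * ‖y‖ ^ β := abs_le_two_mul_rpow_of_one_le_norm hβ hfb (by linarith)
      _ = 2 * Cf * ‖y‖ ^ (-p) * ‖y‖ ^ (β + p) := by rw [hsplit]; ring
      _ ≤ 2 * Cf * R ^ (-p) * ‖y‖ ^ (β + p) := by gcongr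
  · rw [indicator_of_notMem hy, abs_zero]
    positivity

variable [MeasurableSpace α] [OpensMeasurableSpace α] {ν ν' : Measure α}

lemma integrable_indicator_compl_closedBall_and_abs_integral_le (hf : Measurable f)
    (hβ : 0 ≤ β) (hp : 0 ≤ p) (hR : 1 ≤ R) (hfb : ∀ y, |f y| ≤ Cf * (1 + ‖y‖ ^ β))
    (hν : Integrable (fun y ↦ ‖y‖ ^ (β + p)) ν) :
    Integrable ((Metric.closedBall 0 R)ᶜ.indicator f) ν ∧
      |∫ y, (Metric.closedBall 0 R)ᶜ.indicator f y ∂ν| ≤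
        2 * Cf * R ^ (-p) * ∫ y, ‖y‖ ^ (β + p) ∂ν := by
  have hbound := ae_of_all ν (abs_indicator_compl_closedBall_le hβ hp hR hfb)
  refine ⟨(hν.const_mul _).mono'
    (hf.indicator Metric.isClosed_closedBall.measurableSet.compl).aestronglyMeasurable hbound, ?_⟩
  rw [← integral_const_mul]
  exact norm_integral_le_of_norm_le (f := (Metric.closedBall 0 R)ᶜ.indicator f)
    (hν.const_mul (2 * Cf * R ^ (-p))) hbound

lemma abs_integral_sub_integral_le_of_abs_le_mul_one_add_rpow [IsFiniteMeasure ν]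
    [IsFiniteMeasure ν'] (hf : Measurable f) (hβ : 0 ≤ β) (hp : 0 ≤ p) (hR : 1 ≤ R)
    (hfb : ∀ y, |f y| ≤ Cf * (1 + ‖y‖ ^ β)) (hν : Integrable (fun y ↦ ‖y‖ ^ (β + p)) ν)
    (hν' : Integrable (fun y ↦ ‖y‖ ^ (β + p)) ν') :
    |∫ y, f y ∂ν - ∫ y, f y ∂ν'| ≤ 2 * Cf * (R ^ β * tvNorm ν ν' +
      R ^ (-p) * (∫ y, ‖y‖ ^ (β + p) ∂ν + ∫ y, ‖y‖ ^ (β + p) ∂ν')) := by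
  set s := Metric.closedBall (0 : α) R
  have hs : MeasurableSet s := Metric.isClosed_closedBall.measurableSet
  have hCf := nonneg_of_abs_le_mul_one_add_rpow hfb
  have hbounded : ∀ y, |s.indicator f y| ≤ 2 * Cf * R ^ β :=
    abs_indicator_closedBall_le hβ hR hfb
  have hsplit : ∀ (ρ : Measure α) [IsFiniteMeasure ρ], Integrable (sᶜ.indicator f) ρ →
      ∫ y, f y ∂ρ = ∫ y, s.indicator f y ∂ρ + ∫ y, sᶜ.indicator f y ∂ρ := fun ρ _ htail ↦ by
    rw [← integral_add (.of_bound (hf.indicator hs).aestronglyMeasurable _ (ae_of_all ρ hbounded))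
      htail]
    simp only [indicator_self_add_compl_apply]
  obtain ⟨hintν, htailν⟩ :=
    integrable_indicator_compl_closedBall_and_abs_integral_le hf hβ hp hR hfb hν
  obtain ⟨hintν', htailν'⟩ :=
    integrable_indicator_compl_closedBall_and_abs_integral_le hf hβ hp hR hfb hν'
  have hball := abs_integral_sub_integral_le_mul_tvNorm (ν := ν) (ν' := ν') (hf.indicator hs)
    (by positivity) hbounded
  rw [hsplit ν hintν, hsplit ν' hintν']
  rw [abs_le] at hball htailν htailν' ⊢
  constructor <;> linarith

lemma integrable_of_abs_le_mul_one_add_rpow [IsFiniteMeasure ν] (hf : Measurable f)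
    (hβ : 0 ≤ β) (hp : 0 ≤ p) (hfb : ∀ y, |f y| ≤ Cf * (1 + ‖y‖ ^ β))
    (hν : Integrable (fun y ↦ ‖y‖ ^ (β + p)) ν) : Integrable f ν := by
  have hball : Integrable ((Metric.closedBall 0 1).indicator f) ν :=
    .of_bound (hf.indicator Metric.isClosed_closedBall.measurableSet).aestronglyMeasurable _
      (ae_of_all ν (abs_indicator_closedBall_le hβ le_rfl hfb))
  simpa only [indicator_self_add_compl] using hball.add
    (integrable_indicator_compl_closedBall_and_abs_integral_le hf hβ hp le_rfl hfb hν).1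

lemma abs_integral_le_of_tvNorm_le_of_moment_le [IsFiniteMeasure ν] [IsFiniteMeasure ν']
    (hf : Measurable f) (hβ : 0 ≤ β) (hp : 0 ≤ p) (hR : 1 ≤ R)
    (hfb : ∀ y, |f y| ≤ Cf * (1 + ‖y‖ ^ β)) (hf0 : ∫ y, f y ∂ν' = 0) {A B : ℝ}
    (htv : tvNorm ν ν' ≤ A * R ^ (-(β + p))) (hB : 0 ≤ B)
    (hνB : ∫⁻ y, ENNReal.ofReal (‖y‖ ^ (β + p)) ∂ν ≤ ENNReal.ofReal B)
    (hν' : Integrable (fun y ↦ ‖y‖ ^ (β + p)) ν') :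
    |∫ y, f y ∂ν| ≤ 2 * Cf * (A + B + ∫ y, ‖y‖ ^ (β + p) ∂ν') * R ^ (-p) := by
  obtain ⟨hν, hνB⟩ := integrable_and_integral_le_of_lintegral_ofReal_le
    (measurable_norm.pow_const _).aestronglyMeasurable (ae_of_all _ fun y ↦ by positivity) hB hνB
  have h := abs_integral_sub_integral_le_of_abs_le_mul_one_add_rpow hf hβ hp hR hfb hν hν'
  rw [hf0, sub_zero] at h
  have hCf := nonneg_of_abs_le_mul_one_add_rpow hfb
  have htv' : R ^ β * tvNorm ν ν' ≤ A * R ^ (-p) :=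
    calc R ^ β * tvNorm ν ν' ≤ R ^ β * (A * R ^ (-(β + p))) := by gcongr
      _ = A * R ^ (-p) := by
        rw [mul_left_comm, ← Real.rpow_add (by linarith)]
        ring_nf
  refine h.trans ?_
  calc 2 * Cf * (R ^ β * tvNorm ν ν' + R ^ (-p) * (∫ y, ‖y‖ ^ (β + p) ∂ν + ∫ y, ‖y‖ ^ (β + p) ∂ν'))
      ≤ 2 * Cf * (A * R ^ (-p) + R ^ (-p) * (B + ∫ y, ‖y‖ ^ (β + p) ∂ν')) := by gcongr
    _ = 2 * Cf * (A + B + ∫ y, ‖y‖ ^ (β + p) ∂ν') * R ^ (-p) := by ring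

end Truncation

section Invariance

variable {X : Type*} [MeasurableSpace X] {μ : Measure X} {f : X → ℝ}

lemma comp_eq_of_lintegral_apply_eq {κ : Kernel X X}
    (h : ∀ E, MeasurableSet E → ∫⁻ x, κ x E ∂μ = μ E) : κ ∘ₘ μ = μ :=
  Measure.ext fun E hE ↦ by rw [Measure.bind_apply hE κ.aemeasurable, h E hE]

lemma integral_integral_eq_integral_of_comp_eq {κ : Kernel X X} (hκμ : κ ∘ₘ μ = μ)
    (hf : Integrable f μ) : ∫ x, ∫ y, f y ∂κ x ∂μ = ∫ y, f y ∂μ := by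
  rw [← hκμ, Measure.comp_eq_comp_const_apply] at hf
  conv_rhs => rw [← hκμ, Measure.comp_eq_comp_const_apply, Kernel.integral_comp hf]
  simp

theorem integrable_integral_Ioi_and_integral_eq_zero_of_invariant [SFinite μ]
    {P : ℝ → X → Measure X} (hPmeas : Measurable fun p : ℝ × X ↦ P p.1 p.2)
    (hinv : ∀ t, 0 < t → ∀ E, MeasurableSet E → ∫⁻ x, P t x E ∂μ = μ E)
    (hf : Measurable f) (hfμ : Integrable f μ) (hf0 : ∫ y, f y ∂μ = 0)
    {ψ : X → ℝ} {φ : ℝ → ℝ} (hψ : Integrable ψ μ) (hφ : IntegrableOn φ (Ioi 0))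
    (hbound : ∀ t, 0 < t → ∀ x, |∫ y, f y ∂P t x| ≤ ψ x * φ t) :
    Integrable (fun x ↦ ∫ t in Ioi (0 : ℝ), ∫ y, f y ∂P t x) μ ∧
      ∫ x, (∫ t in Ioi (0 : ℝ), ∫ y, f y ∂P t x) ∂μ = 0 := by
  have hFmeas : StronglyMeasurable fun p : X × ℝ ↦ ∫ y, f y ∂P p.2 p.1 :=
    (hf.stronglyMeasurable.integral_kernel
      (κ := ⟨fun p : ℝ × X ↦ P p.1 p.2, hPmeas⟩)).comp_measurable measurable_swap
  have hbound_ae : ∀ᵐ z ∂μ.prod (volume.restrict (Ioi 0)),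
      ‖∫ y, f y ∂P z.2 z.1‖ ≤ ψ z.1 * φ z.2 :=
    Measure.quasiMeasurePreserving_snd.ae (ae_restrict_of_forall_mem measurableSet_Ioi
      fun t ht x ↦ hbound t ht x) |>.mono fun z hz ↦ hz z.1
  have hint : Integrable (fun z : X × ℝ ↦ ∫ y, f y ∂P z.2 z.1) (μ.prod (volume.restrict (Ioi 0))) :=
    (hψ.mul_prod hφ).mono' hFmeas.aestronglyMeasurable hbound_ae
  refine ⟨hint.integral_prod_left, ?_⟩
  have hslice : ∀ t ∈ Ioi (0 : ℝ), ∫ x, (∫ y, f y ∂P t x) ∂μ = 0 := fun t ht ↦ by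
    rw [← hf0]
    exact integral_integral_eq_integral_of_comp_eq (κ := ⟨P t, hPmeas.comp measurable_prodMk_left⟩)
      (comp_eq_of_lintegral_apply_eq (hinv t ht)) hfμ
  rw [integral_integral_swap hint, setIntegral_congr_fun measurableSet_Ioi hslice, integral_zero]

end Invariance

theorem stmt4_general
    (d : ℕ)
    (P : ℝ → EuclideanSpace ℝ (Fin d) → Measure (EuclideanSpace ℝ (Fin d)))
    (μ : Measure (EuclideanSpace ℝ (Fin d)))
    (hP : ∀ t x, 0 ≤ t → IsProbabilityMeasure (P t x))
    (hμ : IsProbabilityMeasure μ)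
    (hmeas : ∀ E : Set (EuclideanSpace ℝ (Fin d)), MeasurableSet E →
      Measurable (fun p : ℝ × EuclideanSpace ℝ (Fin d) => P p.1 p.2 E))
    (hinv : ∀ t : ℝ, 0 ≤ t → ∀ E : Set (EuclideanSpace ℝ (Fin d)), MeasurableSet E →
      ∫⁻ x, P t x E ∂μ = μ E)
    (hP1 : ∀ m m' : ℝ, 0 < m → m + 2 < m' → ∃ C : ℝ, ∀ t x, 0 ≤ t →
      ∫⁻ y, ENNReal.ofReal (‖y‖ ^ m) ∂(P t x) ≤ ENNReal.ofReal (C * (1 + ‖x‖ ^ m')))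
    (hP2 : ∀ m : ℝ, 0 < m → ∫⁻ y, ENNReal.ofReal (‖y‖ ^ m) ∂μ < ⊤)
    (hP3 : ∀ k m : ℝ, 0 < k → 2 * k + 2 < m → ∃ C : ℝ, ∀ t x, 0 ≤ t →
      tvNorm (P t x) μ ≤ C * (1 + ‖x‖ ^ m) * (1 + t) ^ (-(k + 1)))
    (β Cf : ℝ) (hβ : 0 ≤ β)
    (f : EuclideanSpace ℝ (Fin d) → ℝ) (hf : Measurable f)
    (hfb : ∀ y, |f y| ≤ Cf * (1 + ‖y‖ ^ β))
    (hfμ : ∫ y, f y ∂μ = 0) :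
    Integrable (fun x => ∫ t in Ioi (0 : ℝ), ∫ y, f y ∂(P t x)) μ ∧
    (∫ x, (∫ t in Ioi (0 : ℝ), ∫ y, f y ∂(P t x)) ∂μ) = 0 := by
  have hmoment : ∀ r : ℝ, 0 < r → Integrable (fun y ↦ ‖y‖ ^ r) μ := fun r hr ↦
    (lintegral_ofReal_ne_top_iff_integrable (measurable_norm.pow_const r).aestronglyMeasurable
      (ae_of_all _ fun y ↦ by positivity)).1 (hP2 r hr).ne
  -- These exponents make both terms of the truncation estimate decay like `(1 + t)^{-2}`.
  obtain ⟨C₁, hC₁⟩ := hP1 (β + 2) (β + 5) (by linarith) (by linarith)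
  obtain ⟨C₃, hC₃⟩ := hP3 (β + 1) (2 * β + 5) (by linarith) (by linarith)
  have hone : ∀ r : ℝ, 0 < r → Integrable (fun x ↦ 1 + ‖x‖ ^ r) μ := fun r hr ↦
    (integrable_const 1).add (hmoment r hr)
  refine integrable_integral_Ioi_and_integral_eq_zero_of_invariant
    (Measure.measurable_of_measurable_coe _ hmeas) (fun t ht ↦ hinv t ht.le) hf
    (integrable_of_abs_le_mul_one_add_rpow hf hβ zero_le_two hfb (hmoment _ (by linarith))) hfμ
    (ψ := fun x ↦ 2 * Cf * (|C₃| * (1 + ‖x‖ ^ (2 * β + 5)) + |C₁| * (1 + ‖x‖ ^ (β + 5)) +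
      ∫ y, ‖y‖ ^ (β + 2) ∂μ))
    ((((hone _ (by linarith)).const_mul _).add ((hone _ (by linarith)).const_mul _)).add
      (integrable_const _) |>.const_mul _)
    (integrableOn_add_rpow_Ioi_of_lt (by norm_num : (-2 : ℝ) < -1) (by norm_num : -(1 : ℝ) < 0))
    fun t ht x ↦ ?_
  have := hP t x ht.le
  have htv : tvNorm (P t x) μ ≤ |C₃| * (1 + ‖x‖ ^ (2 * β + 5)) * (t + 1) ^ (-(β + 2)) := by
    refine (hC₃ t x ht.le).trans ?_
    rw [add_comm 1 t, show β + 1 + 1 = β + 2 by ring]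
    gcongr
    exact le_abs_self C₃
  exact abs_integral_le_of_tvNorm_le_of_moment_le hf hβ zero_le_two (by linarith) hfb hfμ htv
    (B := |C₁| * (1 + ‖x‖ ^ (β + 5))) (by positivity)
    ((hC₁ t x ht.le).trans (ENNReal.ofReal_le_ofReal (by gcongr; exact le_abs_self C₁)))
    (hmoment _ (by linarith))

/-- the function `u(x) = ∫_0^∞ (∫ f dμ_t^x) dt` is `μ`-integrable and
`∫ u dμ = 0`: the solution of the Poisson equation is centered with respect to the
invariant measure `μ`. -/
theorem stmt4
    (d : ℕ) (hd : 1 ≤ d)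
    (P : ℝ → EuclideanSpace ℝ (Fin d) → Measure (EuclideanSpace ℝ (Fin d)))
    (μ : Measure (EuclideanSpace ℝ (Fin d)))
    (hP : ∀ t x, 0 ≤ t → IsProbabilityMeasure (P t x))
    (hμ : IsProbabilityMeasure μ)
    (hmeas : ∀ E : Set (EuclideanSpace ℝ (Fin d)), MeasurableSet E →
      Measurable (fun p : ℝ × EuclideanSpace ℝ (Fin d) => P p.1 p.2 E))
    (hinv : ∀ t : ℝ, 0 ≤ t → ∀ E : Set (EuclideanSpace ℝ (Fin d)), MeasurableSet E →
      ∫⁻ x, P t x E ∂μ = μ E)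
    (hP1 : ∀ m m' : ℝ, 0 < m → m + 2 < m' → ∃ C : ℝ, ∀ t x, 0 ≤ t →
      ∫⁻ y, ENNReal.ofReal (‖y‖ ^ m) ∂(P t x) ≤ ENNReal.ofReal (C * (1 + ‖x‖ ^ m')))
    (hP2 : ∀ m : ℝ, 0 < m → ∫⁻ y, ENNReal.ofReal (‖y‖ ^ m) ∂μ < ⊤)
    (hP3 : ∀ k m : ℝ, 0 < k → 2 * k + 2 < m → ∃ C : ℝ, ∀ t x, 0 ≤ t →
      tvNorm (P t x) μ ≤ C * (1 + ‖x‖ ^ m) * (1 + t) ^ (-(k + 1)))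
    (β Cf : ℝ) (hβ : 0 ≤ β) (hCf : 1 ≤ Cf)
    (f : EuclideanSpace ℝ (Fin d) → ℝ) (hf : Measurable f)
    (hfb : ∀ y, |f y| ≤ Cf * (1 + ‖y‖ ^ β))
    (hfμ : ∫ y, f y ∂μ = 0) :
    Integrable (fun x => ∫ t in Ioi (0 : ℝ), ∫ y, f y ∂(P t x)) μ ∧
    (∫ x, (∫ t in Ioi (0 : ℝ), ∫ y, f y ∂(P t x)) ∂μ) = 0 :=
  stmt4_general d P μ hP hμ hmeas hinv hP1 hP2 hP3 β Cf hβ f hf hfb hfμ
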